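/- Let μ1, μ2 be probability measures on (Θ, Σ) and let Φ : Θ → [0, ∞) be measurable with 0 < Z_{Φ,μ_i} < ∞ for i = 1, 2, and suppose ess inf_{μ_i} Φ = 0 for some i ∈ {1, 2}. Then d_TV((μ1)_Φ, (μ2)_Φ) ≤ (max(Z_{Φ,μ1}, Z_{Φ,μ2}))⁻¹ · ( d_TV(μ1, μ2) + |Z_{Φ,μ2} − Z_{Φ,μ1}|/2 ), and |Z_{Φ,μ2} − Z_{Φ,μ1}| ≤ 2 d_TV(μ1, μ2). -/

import Mathlib

/-!
With `ν = μ1 + μ2` and `f i = dμi/dν`, the likelihood `L = exp (-Φ)` takes values in `(0, 1]`,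
`Z i = ∫ L * f i dν`, and `(μi)_Φ` has `ν`-density `L * f i / Z i`. Hence
`|Z2 - Z1| = |∫ L * (f2 - f1) dν| ≤ ∫ |f1 - f2| dν`, and if `Z1 ≤ Z2` the splitting
`L f1 / Z1 - L f2 / Z2 = L (f1 - f2) / Z2 + L f1 (1 / Z1 - 1 / Z2)`, whose second term is
nonnegative, integrates to at most `2 d_TV(μ1, μ2) / Z2 + 1 - Z1 / Z2`.
-/

open MeasureTheory Real

namespace PaperStmt

variable {Θ : Type*}

/-- The evidence `Z_{Φ,μ} = ∫ exp (-Φ) dμ`. -/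
noncomputable def evid [MeasurableSpace Θ] (μ : Measure Θ) (Φ : Θ → ℝ) : ℝ :=
  ∫ θ, Real.exp (-(Φ θ)) ∂μ

/-- The posterior `μ_Φ`, with density `exp (-Φ) / Z_{Φ,μ}` with respect to `μ`. -/
noncomputable def post [MeasurableSpace Θ] (μ : Measure Θ) (Φ : Θ → ℝ) : Measure Θ :=
  μ.withDensity fun θ => ENNReal.ofReal (Real.exp (-(Φ θ)) / evid μ Φ)

/-- Total variation distance, computed with densities with respect to `ρ1 + ρ2`. -/
noncomputable def tvDist [MeasurableSpace Θ] (ρ1 ρ2 : Measure Θ) : ℝ :=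
  (1 / 2) * ∫ θ, |(ρ1.rnDeriv (ρ1 + ρ2) θ).toReal
    - (ρ2.rnDeriv (ρ1 + ρ2) θ).toReal| ∂(ρ1 + ρ2)

lemma exp_neg_le_one {Φ : Θ → ℝ} (hnn : ∀ θ, 0 ≤ Φ θ) (θ : Θ) : Real.exp (-(Φ θ)) ≤ 1 :=
  Real.exp_le_one_iff.2 (neg_nonpos.2 (hnn θ))

lemma abs_div_mul_sub_div_mul_le {a f1 f2 Z1 Z2 : ℝ} (ha0 : 0 ≤ a) (ha1 : a ≤ 1) (hf1 : 0 ≤ f1)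
    (hZ1 : 0 < Z1) (hle : Z1 ≤ Z2) :
    |a / Z1 * f1 - a / Z2 * f2| ≤ |f1 - f2| / Z2 + f1 * a * (Z1⁻¹ - Z2⁻¹) := by
  have hZ2 : 0 < Z2 := hZ1.trans_le hle
  have hsplit : a / Z1 * f1 - a / Z2 * f2 = a * (f1 - f2) / Z2 + f1 * a * (Z1⁻¹ - Z2⁻¹) := by
    field_simp
    ring
  have hgap : 0 ≤ f1 * a * (Z1⁻¹ - Z2⁻¹) :=
    mul_nonneg (mul_nonneg hf1 ha0) (sub_nonneg.2 (inv_anti₀ hZ1 hle))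
  calc |a / Z1 * f1 - a / Z2 * f2|
      ≤ |a * (f1 - f2) / Z2| + |f1 * a * (Z1⁻¹ - Z2⁻¹)| := hsplit ▸ abs_add_le _ _
    _ ≤ |f1 - f2| / Z2 + f1 * a * (Z1⁻¹ - Z2⁻¹) := by
      rw [abs_div, abs_mul, abs_of_nonneg ha0, abs_of_pos hZ2, abs_of_nonneg hgap]
      gcongr
      exact mul_le_of_le_one_left (abs_nonneg _) ha1

section

variable [MeasurableSpace Θ] {Φ : Θ → ℝ}

instance isFiniteMeasure_post (μ : Measure Θ) : IsFiniteMeasure (post μ Φ) := by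
  by_cases h : Integrable (fun θ => Real.exp (-(Φ θ))) μ
  · exact isFiniteMeasure_withDensity_ofReal (h.div_const _).2
  · -- the evidence of a non-integrable likelihood is the junk value `0`
    rw [post, evid, integral_undef h]
    simp only [div_zero, ENNReal.ofReal_zero, ← Pi.zero_def, withDensity_zero]
    infer_instance

lemma post_absolutelyContinuous (μ : Measure Θ) : post μ Φ ≪ μ :=
  withDensity_absolutelyContinuous _ _

lemma tvDist_comm (ρ1 ρ2 : Measure Θ) : tvDist ρ1 ρ2 = tvDist ρ2 ρ1 := by
  simp only [tvDist, add_comm ρ2 ρ1, abs_sub_comm]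

lemma tvDist_eq_integral_rnDeriv {ρ1 ρ2 ν : Measure Θ}
    [IsFiniteMeasure ρ1] [IsFiniteMeasure ρ2] [SigmaFinite ν] (h1 : ρ1 ≪ ν) (h2 : ρ2 ≪ ν) :
    tvDist ρ1 ρ2 = 1 / 2 * ∫ θ, |(ρ1.rnDeriv ν θ).toReal - (ρ2.rnDeriv ν θ).toReal| ∂ν := by
  have hρ1 : ρ1 ≪ ρ1 + ρ2 := Measure.AbsolutelyContinuous.rfl.add_right ρ2
  have hρ2 : ρ2 ≪ ρ1 + ρ2 := Measure.AbsolutelyContinuous.rfl.add_right' ρ1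
  rw [tvDist, ← integral_rnDeriv_smul (h1.add_left h2)]
  congr 1
  refine integral_congr_ae ?_
  filter_upwards [Measure.rnDeriv_mul_rnDeriv (κ := ν) hρ1,
    Measure.rnDeriv_mul_rnDeriv (κ := ν) hρ2] with θ hθ1 hθ2
  rw [smul_eq_mul, ← abs_of_nonneg ENNReal.toReal_nonneg, ← abs_mul, mul_sub,
    ← ENNReal.toReal_mul, ← ENNReal.toReal_mul, mul_comm, ← Pi.mul_apply, hθ1,
    mul_comm, ← Pi.mul_apply (ρ2.rnDeriv _), hθ2]

lemma integrable_exp_neg (μ : Measure Θ) [IsFiniteMeasure μ] (hΦ : Measurable Φ)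
    (hnn : ∀ θ, 0 ≤ Φ θ) : Integrable (fun θ => Real.exp (-(Φ θ))) μ :=
  (integrable_const 1).mono' (by fun_prop) <| .of_forall fun θ => by
    simpa [Real.norm_eq_abs, abs_of_pos (Real.exp_pos _)] using exp_neg_le_one hnn θ

lemma evid_pos (μ : Measure Θ) [IsFiniteMeasure μ] [NeZero μ] (hΦ : Measurable Φ)
    (hnn : ∀ θ, 0 ≤ Φ θ) : 0 < evid μ Φ := by
  rw [evid, integral_pos_iff_support_of_nonneg (fun θ => (Real.exp_pos _).le)
    (integrable_exp_neg μ hΦ hnn), Function.support_eq_univ fun θ => (Real.exp_pos _).ne']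
  exact Measure.measure_univ_pos.2 (NeZero.ne μ)

lemma evid_eq_integral_rnDeriv {μ ν : Measure Θ} [IsFiniteMeasure μ] [SigmaFinite ν] (h : μ ≪ ν) :
    evid μ Φ = ∫ θ, (μ.rnDeriv ν θ).toReal * Real.exp (-(Φ θ)) ∂ν :=
  (integral_rnDeriv_smul h).symm

lemma integrable_toReal_rnDeriv_mul_exp_neg (μ ν : Measure Θ) [IsFiniteMeasure μ]
    (hΦ : Measurable Φ) (hnn : ∀ θ, 0 ≤ Φ θ) :
    Integrable (fun θ => (μ.rnDeriv ν θ).toReal * Real.exp (-(Φ θ))) ν :=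
  Measure.integrable_toReal_rnDeriv.mul_bdd (c := 1) (by fun_prop) <| .of_forall fun θ => by
    simpa [Real.norm_eq_abs, abs_of_pos (Real.exp_pos _)] using exp_neg_le_one hnn θ

lemma toReal_rnDeriv_post (μ ν : Measure Θ) [IsFiniteMeasure μ] [SigmaFinite ν]
    (hΦ : Measurable Φ) :
    (fun θ => ((post μ Φ).rnDeriv ν θ).toReal)
      =ᵐ[ν] fun θ => Real.exp (-(Φ θ)) / evid μ Φ * (μ.rnDeriv ν θ).toReal := by
  have hZ : 0 ≤ evid μ Φ := integral_nonneg fun θ => (Real.exp_pos _).le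
  filter_upwards [Measure.rnDeriv_withDensity_left (μ := μ) (ν := ν)
    (f := fun θ => ENNReal.ofReal (Real.exp (-(Φ θ)) / evid μ Φ)) (by fun_prop)
    (.of_forall fun θ => ENNReal.ofReal_ne_top)] with θ hθ
  rw [post, hθ, ENNReal.toReal_mul, ENNReal.toReal_ofReal (by positivity)]

lemma abs_evid_sub_le_two_mul_tvDist (μ1 μ2 : Measure Θ) [IsFiniteMeasure μ1] [IsFiniteMeasure μ2]
    (hΦ : Measurable Φ) (hnn : ∀ θ, 0 ≤ Φ θ) :
    |evid μ2 Φ - evid μ1 Φ| ≤ 2 * tvDist μ1 μ2 := by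
  set ν := μ1 + μ2
  set f1 := fun θ => (μ1.rnDeriv ν θ).toReal
  set f2 := fun θ => (μ2.rnDeriv ν θ).toReal
  have h1 : μ1 ≪ ν := Measure.AbsolutelyContinuous.rfl.add_right μ2
  have h2 : μ2 ≪ ν := Measure.AbsolutelyContinuous.rfl.add_right' μ1
  have hint1 := integrable_toReal_rnDeriv_mul_exp_neg μ1 ν hΦ hnn
  have hint2 := integrable_toReal_rnDeriv_mul_exp_neg μ2 ν hΦ hnn
  rw [evid_eq_integral_rnDeriv h1, evid_eq_integral_rnDeriv h2, ← integral_sub hint2 hint1]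
  calc |∫ θ, (f2 θ * Real.exp (-(Φ θ)) - f1 θ * Real.exp (-(Φ θ))) ∂ν|
      ≤ ∫ θ, |f2 θ * Real.exp (-(Φ θ)) - f1 θ * Real.exp (-(Φ θ))| ∂ν :=
        abs_integral_le_integral_abs
    _ ≤ ∫ θ, |f1 θ - f2 θ| ∂ν := by
      refine integral_mono (hint2.sub hint1).abs
        (Measure.integrable_toReal_rnDeriv.sub Measure.integrable_toReal_rnDeriv).abs fun θ => ?_
      rw [← sub_mul, abs_mul, abs_of_pos (Real.exp_pos _), abs_sub_comm]
      exact mul_le_of_le_one_right (abs_nonneg _) (exp_neg_le_one hnn θ)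
    _ = 2 * tvDist μ1 μ2 := by rw [tvDist]; ring

lemma tvDist_post_le_of_evid_le (μ1 μ2 : Measure Θ) [IsFiniteMeasure μ1] [IsFiniteMeasure μ2]
    (hΦ : Measurable Φ) (hnn : ∀ θ, 0 ≤ Φ θ) (hZ1 : 0 < evid μ1 Φ)
    (hle : evid μ1 Φ ≤ evid μ2 Φ) :
    tvDist (post μ1 Φ) (post μ2 Φ)
      ≤ (evid μ2 Φ)⁻¹ * (tvDist μ1 μ2 + (evid μ2 Φ - evid μ1 Φ) / 2) := by
  set Z1 := evid μ1 Φ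
  set Z2 := evid μ2 Φ
  set ν := μ1 + μ2
  set f1 := fun θ => (μ1.rnDeriv ν θ).toReal
  set f2 := fun θ => (μ2.rnDeriv ν θ).toReal
  have h1 : μ1 ≪ ν := Measure.AbsolutelyContinuous.rfl.add_right μ2
  have h2 : μ2 ≪ ν := Measure.AbsolutelyContinuous.rfl.add_right' μ1
  have hdiff : Integrable (fun θ => |f1 θ - f2 θ|) ν :=
    (Measure.integrable_toReal_rnDeriv.sub Measure.integrable_toReal_rnDeriv).abs
  have hint1 := integrable_toReal_rnDeriv_mul_exp_neg μ1 ν hΦ hnn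
  have hbound : ∫ θ, |((post μ1 Φ).rnDeriv ν θ).toReal - ((post μ2 Φ).rnDeriv ν θ).toReal| ∂ν
      ≤ ∫ θ, (|f1 θ - f2 θ| / Z2 + f1 θ * Real.exp (-(Φ θ)) * (Z1⁻¹ - Z2⁻¹)) ∂ν := by
    refine integral_mono_ae
      (Measure.integrable_toReal_rnDeriv.sub Measure.integrable_toReal_rnDeriv).abs
      ((hdiff.div_const _).add (hint1.mul_const _)) ?_
    filter_upwards [toReal_rnDeriv_post μ1 ν hΦ, toReal_rnDeriv_post μ2 ν hΦ] with θ hθ1 hθ2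
    rw [hθ1, hθ2]
    exact abs_div_mul_sub_div_mul_le (Real.exp_pos _).le (exp_neg_le_one hnn θ)
      ENNReal.toReal_nonneg hZ1 hle
  rw [integral_add (hdiff.div_const _) (hint1.mul_const _), integral_div, integral_mul_const,
    ← evid_eq_integral_rnDeriv h1] at hbound
  rw [tvDist_eq_integral_rnDeriv ((post_absolutelyContinuous μ1).trans h1)
    ((post_absolutelyContinuous μ2).trans h2)]
  have hZ2 : 0 < Z2 := hZ1.trans_le hle
  calc 1 / 2 * ∫ θ, |((post μ1 Φ).rnDeriv ν θ).toReal - ((post μ2 Φ).rnDeriv ν θ).toReal| ∂ν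
      ≤ 1 / 2 * ((∫ θ, |f1 θ - f2 θ| ∂ν) / Z2 + Z1 * (Z1⁻¹ - Z2⁻¹)) := by gcongr
    _ = Z2⁻¹ * (tvDist μ1 μ2 + (Z2 - Z1) / 2) := by
      rw [tvDist]
      field_simp
      ring

end

theorem stmt6_general [MeasurableSpace Θ] (μ1 μ2 : Measure Θ)
    [IsProbabilityMeasure μ1] [IsProbabilityMeasure μ2]
    (Φ : Θ → ℝ) (hΦ : Measurable Φ) (hnn : ∀ θ, 0 ≤ Φ θ) :
    tvDist (post μ1 Φ) (post μ2 Φ)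
        ≤ (max (evid μ1 Φ) (evid μ2 Φ))⁻¹
            * (tvDist μ1 μ2 + |evid μ2 Φ - evid μ1 Φ| / 2)
    ∧ |evid μ2 Φ - evid μ1 Φ| ≤ 2 * tvDist μ1 μ2 := by
  refine ⟨?_, abs_evid_sub_le_two_mul_tvDist μ1 μ2 hΦ hnn⟩
  rcases le_total (evid μ1 Φ) (evid μ2 Φ) with h | h
  · rw [max_eq_right h, abs_of_nonneg (sub_nonneg.2 h)]
    exact tvDist_post_le_of_evid_le μ1 μ2 hΦ hnn (evid_pos μ1 hΦ hnn) h
  · rw [max_eq_left h, abs_sub_comm, abs_of_nonneg (sub_nonneg.2 h), tvDist_comm (post μ1 Φ),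
      tvDist_comm μ1]
    exact tvDist_post_le_of_evid_le μ2 μ1 hΦ hnn (evid_pos μ2 hΦ hnn) h

/-- total variation upper bound for prior perturbations, for a nonnegative
misfit `Φ` with `ess inf_{μ_i} Φ = 0` for some `i`, together with
`|Z_{Φ,μ2} - Z_{Φ,μ1}| ≤ 2 d_TV(μ1, μ2)`. -/
theorem stmt6 [MeasurableSpace Θ] (μ1 μ2 : Measure Θ)
    [IsProbabilityMeasure μ1] [IsProbabilityMeasure μ2]
    (Φ : Θ → ℝ) (hΦ : Measurable Φ) (hnn : ∀ θ, 0 ≤ Φ θ)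
    (hint1 : Integrable (fun θ => Real.exp (-(Φ θ))) μ1)
    (hint2 : Integrable (fun θ => Real.exp (-(Φ θ))) μ2)
    (hZ1 : 0 < evid μ1 Φ) (hZ2 : 0 < evid μ2 Φ)
    (hei : essInf Φ μ1 = 0 ∨ essInf Φ μ2 = 0) :
    tvDist (post μ1 Φ) (post μ2 Φ)
        ≤ (max (evid μ1 Φ) (evid μ2 Φ))⁻¹
            * (tvDist μ1 μ2 + |evid μ2 Φ - evid μ1 Φ| / 2)
    ∧ |evid μ2 Φ - evid μ1 Φ| ≤ 2 * tvDist μ1 μ2 :=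
  stmt6_general μ1 μ2 Φ hΦ hnn

end PaperStmt
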